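/- Under single-layer bit-flip reweighting with base scaling factor δ̃, the probability G_t that the sampled token lies in the 'green' partition (the partition favored by the coin flip) satisfies E[G_t] = 0.5 + δ̃·τ_t when 0 ≤ τ_t ≤ 1/(1+δ̃), and E[G_t] = 1.5 − τ_t when 1/(1+δ̃) < τ_t < 1. -/
import Mathlib


/-- Expectation of the green-token indicator under single-layer bit-flip reweighting:
E[G_t] = 0.5 + δ̃τ for τ ≤ 1/(1+δ̃), and E[G_t] = 1.5 − τ for τ > 1/(1+δ̃). -/
theorem green_token_expectation (τ δt : ℝ)
    (hτ0 : 0 ≤ τ) (hτ1 : τ < 1) (hδ0 : 0 ≤ δt) (hδ1 : δt ≤ 1)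
    (δ₁ δ₀ EG : ℝ)
    (hδ₁ : δ₁ = if τ = 0 then 0 else if (1 + δt) * τ > 1 then (1 - τ) / τ else δt)
    (hδ₀ : δ₀ = δ₁ * τ / (1 - τ))
    (hEG : EG = (1 / 2) * ((1 + δ₁) * τ) + (1 / 2) * ((1 + δ₀) * (1 - τ))) :
    (τ ≤ 1 / (1 + δt) → EG = 0.5 + δt * τ) ∧
    (1 / (1 + δt) < τ → EG = 1.5 - τ) := by
  have h1τ : (1 : ℝ) - τ ≠ 0 := by linarith
  have hδsum : (1 + δ₀) * (1 - τ) = (1 - τ) + δ₁ * τ := by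
    rw [hδ₀]; field_simp
  have hEG' : EG = 1 / 2 + δ₁ * τ := by
    rw [hEG, hδsum]; ring
  have hpos : (0 : ℝ) < 1 + δt := by linarith
  constructor
  · intro h
    have hle : (1 + δt) * τ ≤ 1 := by
      rw [le_div_iff₀ hpos] at h; linarith [h]
    rw [hEG', hδ₁]
    by_cases h0 : τ = 0
    · simp [h0]; norm_num
    · rw [if_neg h0, if_neg (not_lt.mpr hle)]; norm_num
  · intro h
    have hgt : (1 + δt) * τ > 1 := by
      rw [div_lt_iff₀ hpos] at h; linarith [h]
    have h0 : τ ≠ 0 := by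
      intro h0; rw [h0] at hgt; simp at hgt; linarith
    rw [hEG', hδ₁, if_neg h0, if_pos hgt]
    field_simp
    ring
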